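/- arXiv:0712.2627 — 2 statements merged into one kernel-verified Lean document; each statement's English description precedes it below -/
import Mathlib

section
/- Let 𝔤 be a finite-dimensional Lie algebra over a field k, E ⊆ 𝔤 a subspace, and ε an alternating bilinear form on 𝔤. Then L(E,ε) is closed under the semidirect (Courant) bracket on 𝔤 × 𝔤* if and only if E is a Lie subalgebra of 𝔤 (⁅E, E⁆ ⊆ E) and dε(x,y,z) = 0 for all x, y, z ∈ E. -/
variable {k : Type*} [Field k] {L : Type*} [LieRing L] [LieAlgebra k L]

/-- The coadjoint action of `x ∈ 𝔤` on `η ∈ 𝔤*`: `(x ∙ η)(z) = -η(⁅x, z⁆)`. -/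
def coad (x : L) (η : Module.Dual k L) : Module.Dual k L :=
  -(η ∘ₗ LieAlgebra.ad k L x)

/-- The semidirect (Courant) bracket on `𝔤 × 𝔤*`:
`⁅(x, ξ), (y, η)⁆ = (⁅x, y⁆, x ∙ η - y ∙ ξ)`. -/
def courantBracket (a b : L × Module.Dual k L) : L × Module.Dual k L :=
  (⁅a.1, b.1⁆, coad a.1 b.2 - coad b.1 a.2)

/-- The subspace `L(E, ε) ⊆ 𝔤 × 𝔤*` attached to a subspace `E ⊆ 𝔤` and a bilinear form `ε`. -/
def LSet (E : Submodule k L) (ε : L → L → k) : Set (L × Module.Dual k L) :=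
  {p | p.1 ∈ E ∧ ∀ y ∈ E, p.2 y = ε p.1 y}

/-! For `(x, ξ), (y, η) ∈ L(E, ε)` and `z ∈ E` with `⁅x, z⁆, ⁅y, z⁆ ∈ E`, the second component
of their bracket evaluates at `z` to `ε(x, ⁅y, z⁆) - ε(y, ⁅x, z⁆) = ε(⁅x, y⁆, z) + dε(x, y, z)`.
So once `E` is a subalgebra, the bracket lies in `L(E, ε)` exactly when `dε(x, y, ·)` vanishes
on `E`. Subalgebra-ness itself is forced because every `x ∈ E` lifts to `L(E, ε)`: the functional
`ε(x, ·)|_E` extends from `E` to all of `𝔤`. -/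

@[simp]
lemma coad_apply (x : L) (η : Module.Dual k L) (z : L) : coad x η z = -η ⁅x, z⁆ := rfl

lemma courantBracket_fst (a b : L × Module.Dual k L) : (courantBracket a b).1 = ⁅a.1, b.1⁆ :=
  rfl

lemma courantBracket_snd_apply (a b : L × Module.Dual k L) (z : L) :
    (courantBracket a b).2 z = a.2 ⁅b.1, z⁆ - b.2 ⁅a.1, z⁆ := by
  simp only [courantBracket, LinearMap.sub_apply, coad_apply]
  ring

lemma exists_mem_lSet (E : Submodule k L) (ε : L →ₗ[k] L →ₗ[k] k) {x : L} (hx : x ∈ E) :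
    ∃ ξ, (x, ξ) ∈ LSet E (fun x y => ε x y) := by
  obtain ⟨ξ, hξ⟩ := LinearMap.exists_extend ((ε x).comp E.subtype)
  exact ⟨ξ, hx, fun y hy => LinearMap.congr_fun hξ ⟨y, hy⟩⟩

/-- The Chevalley–Eilenberg differential `dε` of a bilinear form `ε`. -/
def dForm (ε : L →ₗ[k] L →ₗ[k] k) (x y z : L) : k :=
  ε x ⁅y, z⁆ + ε y ⁅z, x⁆ + ε z ⁅x, y⁆

section

variable {E : Submodule k L} {ε : L →ₗ[k] L →ₗ[k] k}

lemma courantBracket_snd_apply_of_mem_lSet (hε : ε.IsAlt) {a b : L × Module.Dual k L}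
    (ha : a ∈ LSet E (fun x y => ε x y)) (hb : b ∈ LSet E (fun x y => ε x y)) {z : L}
    (haz : ⁅a.1, z⁆ ∈ E) (hbz : ⁅b.1, z⁆ ∈ E) :
    (courantBracket a b).2 z = ε ⁅a.1, b.1⁆ z + dForm ε a.1 b.1 z := by
  rw [courantBracket_snd_apply, ha.2 _ hbz, hb.2 _ haz, dForm, ← hε.neg z, ← lie_skew z a.1,
    map_neg]
  ring

lemma courantBracket_mem_lSet_iff (hε : ε.IsAlt) (hE : ∀ x ∈ E, ∀ y ∈ E, ⁅x, y⁆ ∈ E)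
    {a b : L × Module.Dual k L} (ha : a ∈ LSet E (fun x y => ε x y))
    (hb : b ∈ LSet E (fun x y => ε x y)) :
    courantBracket a b ∈ LSet E (fun x y => ε x y) ↔ ∀ z ∈ E, dForm ε a.1 b.1 z = 0 := by
  refine (and_iff_right (hE _ ha.1 _ hb.1)).trans (forall₂_congr fun z hz => ?_)
  rw [courantBracket_snd_apply_of_mem_lSet hε ha hb (hE _ ha.1 _ hz) (hE _ hb.1 _ hz),
    courantBracket_fst, add_eq_left]

end

theorem lSet_bracket_closed_iff_general
    (E : Submodule k L) (ε : L →ₗ[k] L →ₗ[k] k) (hεalt : ∀ x, ε x x = 0) :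
    (∀ a ∈ LSet E (fun x y => ε x y), ∀ b ∈ LSet E (fun x y => ε x y),
        courantBracket a b ∈ LSet E (fun x y => ε x y)) ↔
      ((∀ x ∈ E, ∀ y ∈ E, ⁅x, y⁆ ∈ E) ∧
        (∀ x ∈ E, ∀ y ∈ E, ∀ z ∈ E,
          ε x ⁅y, z⁆ + ε y ⁅z, x⁆ + ε z ⁅x, y⁆ = 0)) := by
  constructor
  · intro hclosed
    have hE : ∀ x ∈ E, ∀ y ∈ E, ⁅x, y⁆ ∈ E := fun x hx y hy => by
      obtain ⟨ξ, hξ⟩ := exists_mem_lSet E ε hx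
      obtain ⟨η, hη⟩ := exists_mem_lSet E ε hy
      exact (hclosed _ hξ _ hη).1
    refine ⟨hE, fun x hx y hy => ?_⟩
    obtain ⟨ξ, hξ⟩ := exists_mem_lSet E ε hx
    obtain ⟨η, hη⟩ := exists_mem_lSet E ε hy
    exact (courantBracket_mem_lSet_iff hεalt hE hξ hη).mp (hclosed _ hξ _ hη)
  · rintro ⟨hE, hd⟩ a ha b hb
    exact (courantBracket_mem_lSet_iff hεalt hE ha hb).mpr (hd _ ha.1 _ hb.1)

/-- `L(E, ε)` is closed under the semidirect (Courant) bracket iff `E` is a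
Lie subalgebra and `dε` vanishes on `E³`. -/
theorem lSet_bracket_closed_iff [FiniteDimensional k L]
    (E : Submodule k L) (ε : L →ₗ[k] L →ₗ[k] k) (hεalt : ∀ x, ε x x = 0) :
    (∀ a ∈ LSet E (fun x y => ε x y), ∀ b ∈ LSet E (fun x y => ε x y),
        courantBracket a b ∈ LSet E (fun x y => ε x y)) ↔
      ((∀ x ∈ E, ∀ y ∈ E, ⁅x, y⁆ ∈ E) ∧
        (∀ x ∈ E, ∀ y ∈ E, ∀ z ∈ E,
          ε x ⁅y, z⁆ + ε y ⁅z, x⁆ + ε z ⁅x, y⁆ = 0)) :=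
  lSet_bracket_closed_iff_general E ε hεalt
end

section
/- Let V and W be finite-dimensional vector spaces over a field k and φ : V → W a linear map. If D ⊆ W × W* is a maximal isotropic subspace, then the pullback φ⋆D := {(x, ξ ∘ φ) : x ∈ V, ξ ∈ W*, (φ(x), ξ) ∈ D} is a maximal isotropic subspace of V × V*. -/
/-!
The pairing of `(x, φ*ξ)` and `(y, φ*η)` equals that of `(φ x, ξ)` and `(φ y, η)`, so `φ⋆D` is
isotropic. Conversely, if `(x, α) ⊥ φ⋆D`, then `α` kills `ker φ`, so `α = φ*ξ`, and `(φ x, ξ)` is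
orthogonal to `D ∩ (im φ × W*) = (D + 0 × (im φ)⁰)^⊥`. By nondegeneracy in finite dimension,
`(φ x, ξ) = d + (0, ν)` with `d ∈ D` and `ν ∈ (im φ)⁰ = ker φ*`, so `d = (φ x, ξ - ν)` exhibits
`(x, α) = (x, φ*(ξ - ν)) ∈ φ⋆D`.
-/

variable {k : Type*} [Field k] {V W : Type*} [AddCommGroup V] [Module k V]
  [AddCommGroup W] [Module k W]

/-- The canonical symmetric pairing on `V × V*`: `⟨(x, ξ), (y, η)⟩ = ξ(y) + η(x)`. -/
def pairVD (a b : V × Module.Dual k V) : k :=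
  a.2 b.1 + b.2 a.1

/-- The pullback `φ⋆D = {(x, ξ ∘ φ) : (φ x, ξ) ∈ D}` of a subset `D ⊆ W × W*` along a linear
map `φ : V → W`. -/
def pullDirac (φ : V →ₗ[k] W) (D : Set (W × Module.Dual k W)) :
    Set (V × Module.Dual k V) :=
  {p | ∃ ξ : Module.Dual k W, p.2 = φ.dualMap ξ ∧ (φ p.1, ξ) ∈ D}

open LinearMap (BilinForm)

namespace LinearMap.BilinForm

variable {K M : Type*} [Field K] [AddCommGroup M] [Module K M] (B : BilinForm K M)

theorem orthogonal_sup (N L : Submodule K M) :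
    B.orthogonal (N ⊔ L) = B.orthogonal N ⊓ B.orthogonal L := by
  refine le_antisymm (le_inf (orthogonal_le le_sup_left) (orthogonal_le le_sup_right)) ?_
  rintro m ⟨hN, hL⟩ x hx
  obtain ⟨n, hn, l, hl, rfl⟩ := Submodule.mem_sup.mp hx
  rw [map_add, LinearMap.add_apply, hN n hn, hL l hl, add_zero]

variable [FiniteDimensional K M]

theorem orthogonal_inf_orthogonal_of_orthogonal_eq_self {B : BilinForm K M}
    (hB : B.Nondegenerate) (hB₀ : B.IsRefl) {N : Submodule K M} (hN : B.orthogonal N = N)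
    (L : Submodule K M) : B.orthogonal (N ⊓ B.orthogonal L) = N ⊔ L := by
  calc B.orthogonal (N ⊓ B.orthogonal L) = B.orthogonal (B.orthogonal N ⊓ B.orthogonal L) := by
        rw [hN]
    _ = N ⊔ L := by rw [← orthogonal_sup, orthogonal_orthogonal hB hB₀]

end LinearMap.BilinForm

variable (k V) in
/-- `pairVD` as a bilinear form: Mathlib's `LinearMap.dualProd`, with the factors swapped. -/
def diracForm : BilinForm k (V × Module.Dual k V) :=
  BilinForm.congr (LinearEquiv.prodComm k _ _) (LinearMap.dualProd k V)

theorem diracForm_apply (a b : V × Module.Dual k V) : diracForm k V a b = pairVD a b := by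
  simp [diracForm, pairVD, add_comm]

theorem pairVD_comm (a b : V × Module.Dual k V) : pairVD a b = pairVD b a :=
  add_comm _ _

theorem isRefl_diracForm : (diracForm k V).IsRefl := fun a b h => by
  rwa [diracForm_apply, pairVD_comm, ← diracForm_apply]

theorem nondegenerate_diracForm : (diracForm k V).Nondegenerate :=
  .congr _ <| (LinearMap.isSymm_dualProd k V).isRefl.nondegenerate_iff_separatingLeft.mpr <|
    (LinearMap.separatingLeft_dualProd k V).mpr (Module.eval_apply_injective k)

theorem mem_orthogonal_diracForm_iff {L : Submodule k (V × Module.Dual k V)}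
    {a : V × Module.Dual k V} :
    a ∈ (diracForm k V).orthogonal L ↔ ∀ b ∈ L, pairVD a b = 0 := by
  simp only [BilinForm.mem_orthogonal_iff, diracForm_apply, pairVD_comm]

theorem orthogonal_bot_prod_dualAnnihilator (U : Submodule k W) :
    (diracForm k W).orthogonal ((⊥ : Submodule k W).prod U.dualAnnihilator) = U.prod ⊤ := by
  ext ⟨w, ω⟩
  simp only [mem_orthogonal_diracForm_iff, Submodule.mem_prod, Submodule.mem_bot,
    Submodule.mem_top, and_true, Prod.forall, pairVD]
  constructor
  · intro h
    rw [← Subspace.forall_mem_dualAnnihilator_apply_eq_zero_iff]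
    intro μ hμ
    simpa using h 0 μ ⟨rfl, hμ⟩
  · rintro hw _ μ ⟨rfl, hμ⟩
    simp [(Submodule.mem_dualAnnihilator _).mp hμ w hw]

theorem pairVD_dualMap (φ : V →ₗ[k] W) (x y : V) (ξ η : Module.Dual k W) :
    pairVD (x, φ.dualMap ξ) (y, φ.dualMap η) = pairVD (φ x, ξ) (φ y, η) :=
  rfl

theorem pullDirac_isotropic (φ : V →ₗ[k] W) {D : Set (W × Module.Dual k W)}
    (hD : ∀ a ∈ D, ∀ b ∈ D, pairVD a b = 0) :
    ∀ a ∈ pullDirac φ D, ∀ b ∈ pullDirac φ D, pairVD a b = 0 := by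
  rintro ⟨x, _⟩ ⟨ξ, rfl, hξ⟩ ⟨y, _⟩ ⟨η, rfl, hη⟩
  rw [pairVD_dualMap]
  exact hD _ hξ _ hη

variable {φ : V →ₗ[k] W} {D : Submodule k (W × Module.Dual k W)}

/-- `(y, 0) ∈ φ⋆D` for `y ∈ ker φ`, so `α` kills `ker φ` and hence factors through `φ`. -/
theorem mem_range_dualMap_of_forall_pairVD_eq_zero {x : V} {α : Module.Dual k V}
    (h : ∀ b ∈ pullDirac φ D, pairVD (x, α) b = 0) : α ∈ LinearMap.range φ.dualMap := by
  rw [LinearMap.range_dualMap_eq_dualAnnihilator_ker, Submodule.mem_dualAnnihilator]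
  intro y hy
  have hy0 : ((y, 0) : V × Module.Dual k V) ∈ pullDirac φ D :=
    ⟨0, (map_zero _).symm, by
      show (φ y, 0) ∈ D
      rw [LinearMap.mem_ker.mp hy]
      exact D.zero_mem⟩
  simpa [pairVD] using h _ hy0

theorem mem_orthogonal_inf_of_forall_pairVD_eq_zero {x : V} {ξ : Module.Dual k W}
    (h : ∀ b ∈ pullDirac φ D, pairVD (x, φ.dualMap ξ) b = 0) :
    (φ x, ξ) ∈ (diracForm k W).orthogonal (D ⊓ (LinearMap.range φ).prod ⊤) := by
  rw [mem_orthogonal_diracForm_iff]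
  rintro ⟨_, η⟩ ⟨hD, ⟨y, rfl⟩, -⟩
  rw [← pairVD_dualMap]
  exact h _ ⟨η, rfl, hD⟩

theorem mem_pullDirac_of_mem_sup {x : V} {ξ : Module.Dual k W}
    (h : (φ x, ξ) ∈ D ⊔ (⊥ : Submodule k W).prod (LinearMap.range φ).dualAnnihilator) :
    (x, φ.dualMap ξ) ∈ pullDirac φ D := by
  obtain ⟨d, hd, ⟨_, ν⟩, ⟨rfl, hν⟩, hdν⟩ := Submodule.mem_sup.mp h
  rw [← LinearMap.ker_dualMap_eq_dualAnnihilator_range] at hν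
  refine ⟨ξ - ν, by rw [map_sub, hν, sub_zero], ?_⟩
  rw [eq_sub_of_add_eq hdν] at hd
  show (φ x, ξ - ν) ∈ D
  convert hd using 1
  ext <;> simp

theorem pullDirac_maximal_isotropic_general [FiniteDimensional k W]
    (φ : V →ₗ[k] W) (D : Submodule k (W × Module.Dual k W))
    (hmax : ∀ a : W × Module.Dual k W, a ∈ D ↔ ∀ b ∈ D, pairVD a b = 0) :
    ∀ a : V × Module.Dual k V,
      a ∈ pullDirac φ (D : Set (W × Module.Dual k W)) ↔
        ∀ b ∈ pullDirac φ (D : Set (W × Module.Dual k W)), pairVD a b = 0 := by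
  intro a
  refine ⟨fun ha => pullDirac_isotropic φ (fun a ha => (hmax a).1 ha) a ha, fun h => ?_⟩
  obtain ⟨x, α⟩ := a
  obtain ⟨ξ, rfl⟩ := mem_range_dualMap_of_forall_pairVD_eq_zero h
  have hD : (diracForm k W).orthogonal D = D := by
    ext a
    rw [mem_orthogonal_diracForm_iff, hmax]
  apply mem_pullDirac_of_mem_sup
  rw [← BilinForm.orthogonal_inf_orthogonal_of_orthogonal_eq_self nondegenerate_diracForm
    isRefl_diracForm hD, orthogonal_bot_prod_dualAnnihilator]
  exact mem_orthogonal_inf_of_forall_pairVD_eq_zero h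

/-- The pullback of a maximal isotropic subspace `D ⊆ W × W*` along a linear
map `φ : V → W` is a maximal isotropic subspace of `V × V*` (i.e. it equals its own
orthogonal for the canonical pairing). -/
theorem pullDirac_maximal_isotropic [FiniteDimensional k V] [FiniteDimensional k W]
    (φ : V →ₗ[k] W) (D : Submodule k (W × Module.Dual k W))
    (hmax : ∀ a : W × Module.Dual k W, a ∈ D ↔ ∀ b ∈ D, pairVD a b = 0) :
    ∀ a : V × Module.Dual k V,
      a ∈ pullDirac φ (D : Set (W × Module.Dual k W)) ↔
        ∀ b ∈ pullDirac φ (D : Set (W × Module.Dual k W)), pairVD a b = 0 :=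
  pullDirac_maximal_isotropic_general φ D hmax
end
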